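/- For real numbers H and S with S > 0, H ≠ 0, and satisfying both 8H·f₃ − 7H²S + H⁴ = 0 and 8H·f₃² + (H⁴ − 11H²S − 2S²)·f₃ + 5H³S² − H⁵S = 0 for some real f₃, it follows that 2H⁴ − 7H²S + 7S² = 0, which is impossible; hence no such H, S, f₃ exist. -/

import Mathlib

/-! Solving the linear equation for `8 H f₃` and substituting into the quadratic one (multiplied
by `8 H`) eliminates `f₃` and leaves `-2 H² S (2 H⁴ - 7 H² S + 7 S²) = 0`. The quadratic form
`2 a² - 7 a s + 7 s²` has negative discriminant `49 - 56`, so it vanishes only at `s = 0`. -/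

theorem two_sq_sub_seven_mul_add_seven_sq_pos {a s : ℝ} (hs : s ≠ 0) :
    0 < 2 * a ^ 2 - 7 * a * s + 7 * s ^ 2 := by
  have hs2 : 0 < s ^ 2 := by positivity
  -- `16 (2 a² - 7 a s + 7 s²) = 2 (4 a - 7 s)² + 14 s²`
  nlinarith [sq_nonneg (4 * a - 7 * s)]

theorem quartic_eq_zero_of_f3_equations {H S f3 : ℝ} (hH : H ≠ 0) (hS : S ≠ 0)
    (e1 : 8 * H * f3 - 7 * H ^ 2 * S + H ^ 4 = 0)
    (e2 : 8 * H * f3 ^ 2 + (H ^ 4 - 11 * H ^ 2 * S - 2 * S ^ 2) * f3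
      + 5 * H ^ 3 * S ^ 2 - H ^ 5 * S = 0) :
    2 * H ^ 4 - 7 * H ^ 2 * S + 7 * S ^ 2 = 0 := by
  have hf3_eliminated : H ^ 2 * S * (2 * H ^ 4 - 7 * H ^ 2 * S + 7 * S ^ 2) = 0 := by
    linear_combination (4 * H * f3 - 2 * H ^ 2 * S - S ^ 2) * e1 - 4 * H * e2
  simpa [hH, hS] using hf3_eliminated

theorem stmt_5 :
    ¬ ∃ (H S f3 : ℝ), S > 0 ∧ H ≠ 0 ∧
      8 * H * f3 - 7 * H ^ 2 * S + H ^ 4 = 0 ∧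
      8 * H * f3 ^ 2 + (H ^ 4 - 11 * H ^ 2 * S - 2 * S ^ 2) * f3
        + 5 * H ^ 3 * S ^ 2 - H ^ 5 * S = 0 := by
  rintro ⟨H, S, f3, hS, hH, e1, e2⟩
  have hquartic := quartic_eq_zero_of_f3_equations hH hS.ne' e1 e2
  have hpos := two_sq_sub_seven_mul_add_seven_sq_pos (a := H ^ 2) hS.ne'
  exact hpos.ne' (by rw [← hquartic]; ring)
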